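/- Let X_c ⊆ X_b be sublevel sets of a plurisubharmonic exhaustion of a Riemann domain X, both Stein, and let K ⋐ X_c be compact with K̂_{X_c} ⊆ K̂_{X_b} ⋐ X_c. If every function holomorphic on some 𝒪(X_b)-analytic polyhedron P with K̂_{X_b} ⋐ P ⋐ X_c can be approximated uniformly on K̂_{X_b} by functions in 𝒪(X_b), then K̂_{X_c} = K̂_{X_b}. -/

import Mathlib

open Set

/-- A Riemann domain over `ℂⁿ`: a connected topological space `X` together with a
locally homeomorphic (hence, via the charts given by `π` itself, locally biholomorphic)
projection `π : X → ℂⁿ`. -/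
structure RiemannDomain (X : Type*) [TopologicalSpace X] (n : ℕ) where
  π : X → (Fin n → ℂ)
  continuous_π : Continuous π
  connected : ConnectedSpace X
  isLocalHomeomorph : IsLocalHomeomorph π

namespace RiemannDomain

variable {X : Type*} [TopologicalSpace X] {n : ℕ}

/-- `RD.SheetIn Ω r x ρ` : there is a "sheet" inside `Ω` around `x`, i.e. an open set `U ⊆ Ω`
containing `x` on which `π` is injective and whose image is the open polydisc of
multiradius `ρ • r` centered at `π x`. -/
def SheetIn (RD : RiemannDomain X n) (Ω : Set X) (r : Fin n → ℝ) (x : X) (ρ : ℝ) : Prop :=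
  ∃ U : Set X, IsOpen U ∧ x ∈ U ∧ U ⊆ Ω ∧ Set.InjOn RD.π U ∧
    RD.π '' U = {z : Fin n → ℂ | ∀ j, dist (z j) (RD.π x j) < ρ * r j}

/-- `δ` is the boundary distance function of `Ω ⊆ X` with respect to the polydisc of
multiradius `r`: at each point of `Ω` it is the least upper bound of the radii of sheets. -/
def IsBoundaryDistOn (RD : RiemannDomain X n) (Ω : Set X) (r : Fin n → ℝ) (δ : X → ℝ) : Prop :=
  ∀ x ∈ Ω, IsLUB {ρ : ℝ | 0 < ρ ∧ RD.SheetIn Ω r x ρ} (δ x)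

/-- A function `f : X → ℂ` is holomorphic on a subset `A` of the Riemann domain `X` if near
every point of `A` it is, read through a sheet of `π`, (the restriction to `A` of) a
holomorphic function of the base variables. For open `A` this is the usual notion of a
holomorphic function on `A`; for an analytic subset `A` it means local holomorphic
extendability to the ambient space. -/
def HolomorphicOn (RD : RiemannDomain X n) (f : X → ℂ) (A : Set X) : Prop :=
  ∀ x ∈ A, ∃ U : Set X, IsOpen U ∧ x ∈ U ∧ Set.InjOn RD.π U ∧ IsOpen (RD.π '' U) ∧
    ∃ g : (Fin n → ℂ) → ℂ, DifferentiableOn ℂ g (RD.π '' U) ∧ Set.EqOn f (g ∘ RD.π) (U ∩ A)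

/-- Holomorphically convex hull of `K` in `Ω` with respect to `𝒪(Ω)`. -/
def hull (RD : RiemannDomain X n) (Ω K : Set X) : Set X :=
  {x ∈ Ω | ∀ f : X → ℂ, RD.HolomorphicOn f Ω → ‖f x‖ ≤ sSup ((fun y => ‖f y‖) '' K)}

/-- Plurisubharmonicity of `u` on a subset `s ⊆ ℂⁿ`: upper semicontinuity together with the
sub-mean-value inequality on every complex line (on circles whose closed disc stays in `s`). -/
def PlurisubharmonicOn (u : (Fin n → ℂ) → ℝ) (s : Set (Fin n → ℂ)) : Prop :=
  UpperSemicontinuousOn u s ∧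
  ∀ z ∈ s, ∀ w : Fin n → ℂ, ∀ R : ℝ, 0 < R →
    (∀ t : ℂ, ‖t‖ ≤ R → z + t • w ∈ s) →
    u z ≤ (1 / (2 * Real.pi)) *
      ∫ θ in (0:ℝ)..(2 * Real.pi), u (z + ((R : ℂ) * Complex.exp (θ * Complex.I)) • w)

/-- A function `v : X → ℝ` is plurisubharmonic on `Ω ⊆ X` if near every point of `Ω`,
read through a sheet of `π`, it is a plurisubharmonic function of the base variables. -/
def PSHOn (RD : RiemannDomain X n) (v : X → ℝ) (Ω : Set X) : Prop :=
  ∀ x ∈ Ω, ∃ U : Set X, IsOpen U ∧ x ∈ U ∧ U ⊆ Ω ∧ Set.InjOn RD.π U ∧ IsOpen (RD.π '' U) ∧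
    ∃ g : (Fin n → ℂ) → ℝ, PlurisubharmonicOn g (RD.π '' U) ∧ Set.EqOn v (g ∘ RD.π) U

/-- `φ` is an exhaustion function of `X`: all sublevel sets are relatively compact. -/
def IsExhaustion {X : Type*} [TopologicalSpace X] (φ : X → ℝ) : Prop :=
  ∀ c : ℝ, IsCompact (closure {x | φ x < c})

/-- An open set `Ω` of the Riemann domain `X` is Stein if it is holomorphically separable,
possesses global holomorphic local coordinates at every point, and is holomorphically convex. -/
def IsSteinOn (RD : RiemannDomain X n) (Ω : Set X) : Prop :=
  (∀ a ∈ Ω, ∀ b ∈ Ω, a ≠ b → ∃ f : X → ℂ, RD.HolomorphicOn f Ω ∧ f a ≠ f b) ∧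
  (∀ x ∈ Ω, ∃ f : Fin n → (X → ℂ), (∀ j, RD.HolomorphicOn (f j) Ω) ∧
    ∃ U : Set X, IsOpen U ∧ x ∈ U ∧ U ⊆ Ω ∧ Set.InjOn RD.π U ∧ IsOpen (RD.π '' U) ∧
      ∃ g : (Fin n → ℂ) → (Fin n → ℂ), DifferentiableOn ℂ g (RD.π '' U) ∧
        (∀ y ∈ U, (fun j => f j y) = g (RD.π y)) ∧
        Function.Bijective (fderivWithin ℂ g (RD.π '' U) (RD.π x)) ∧
        Set.InjOn g (RD.π '' U)) ∧
  (∀ K : Set X, K ⊆ Ω → IsCompact K → IsCompact (RD.hull Ω K))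

end RiemannDomain

/-- `A` is compactly contained in `B`. -/
def CompactlyContained {X : Type*} [TopologicalSpace X] (A B : Set X) : Prop :=
  IsCompact (closure A) ∧ closure A ⊆ B

namespace RiemannDomain

variable {X : Type*} [TopologicalSpace X] {n : ℕ}

/-- A holomorphic extension of a Riemann domain `(X, π)` over `ℂⁿ`: a Riemann domain
`(Y, π')` with an injection `ι : X → Y` over `ℂⁿ` to which all global holomorphic
functions of `X` extend. -/
structure Extension (RD : RiemannDomain X n) (Y : Type*) [TopologicalSpace Y]
    (RDY : RiemannDomain Y n) where
  ι : X → Y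
  inj : Function.Injective ι
  comm : RDY.π ∘ ι = RD.π
  extends_holo : ∀ f : X → ℂ, RD.HolomorphicOn f Set.univ →
    ∃ g : Y → ℂ, RDY.HolomorphicOn g Set.univ ∧ ∀ x, g (ι x) = f x

/-- `X` is a domain of holomorphy: it admits no holomorphic extension other than itself,
i.e. any holomorphic extension is onto. -/
def IsDomainOfHolomorphy {X : Type u} [TopologicalSpace X] {n : ℕ}
    (RD : RiemannDomain X n) : Prop :=
  ∀ (Y : Type u) (_ : TopologicalSpace Y) (RDY : RiemannDomain Y n)
    (e : RD.Extension Y RDY), Function.Surjective e.ι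

/-- A relatively compact open set `Ω ⋐ X` is strongly pseudoconvex if there are a
neighborhood `U` of `∂Ω` and a `C²` function `φ` on `U` with `Ω ∩ U = {φ < 0}` whose Levi
form (expressed through the charts of `π` by the real Hessian, via
`⟨∂∂̄ψ(z) w, w⟩ = (1/4)(Hψ(z)(w,w) + Hψ(z)(iw,iw))`) is positive definite. -/
def StronglyPseudoconvex (RD : RiemannDomain X n) (Ω : Set X) : Prop :=
  IsOpen Ω ∧ IsCompact (closure Ω) ∧
  ∃ U : Set X, IsOpen U ∧ frontier Ω ⊆ U ∧ ∃ φ : X → ℝ,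
    ({x ∈ U | φ x < 0} = Ω ∩ U) ∧
    ∀ x ∈ U, ∃ V : Set X, IsOpen V ∧ x ∈ V ∧ V ⊆ U ∧ Set.InjOn RD.π V ∧
      IsOpen (RD.π '' V) ∧
      ∃ ψ : (Fin n → ℂ) → ℝ, ContDiffOn ℝ 2 ψ (RD.π '' V) ∧
        Set.EqOn φ (ψ ∘ RD.π) V ∧
        ∀ z ∈ RD.π '' V, ∀ w : Fin n → ℂ, w ≠ 0 →
          0 < (iteratedFDerivWithin ℝ 2 ψ (RD.π '' V) z) ![w, w] +
              (iteratedFDerivWithin ℝ 2 ψ (RD.π '' V) z)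
                ![(Complex.I : ℂ) • w, (Complex.I : ℂ) • w]

/-- `S` is a closed complex submanifold of the open set `Ω ⊆ X`: it is closed in `Ω` and is
locally, through the charts of `π`, the common zero set of finitely many holomorphic
functions with linearly independent differentials. -/
def IsClosedSubmanifoldIn (RD : RiemannDomain X n) (S Ω : Set X) : Prop :=
  S ⊆ Ω ∧ IsClosed (Subtype.val ⁻¹' S : Set Ω) ∧
  ∀ x ∈ S, ∃ U : Set X, IsOpen U ∧ x ∈ U ∧ U ⊆ Ω ∧ Set.InjOn RD.π U ∧ IsOpen (RD.π '' U) ∧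
    ∃ (d : ℕ) (h : Fin d → (Fin n → ℂ) → ℂ),
      (∀ i, DifferentiableOn ℂ (h i) (RD.π '' U)) ∧
      (U ∩ S = {y ∈ U | ∀ i, h i (RD.π y) = 0}) ∧
      LinearIndependent ℂ (fun i => fderivWithin ℂ (h i) (RD.π '' U) (RD.π x))

end RiemannDomain

lemma sSup_norm_image_le_add {α E : Type*} [SeminormedAddCommGroup E] {f g : α → E}
    {K : Set α} {ε : ℝ} (hg : BddAbove ((fun y => ‖g y‖) '' K)) (hε : 0 ≤ ε)
    (hfg : ∀ x ∈ K, ‖f x - g x‖ ≤ ε) :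
    sSup ((fun y => ‖f y‖) '' K) ≤ sSup ((fun y => ‖g y‖) '' K) + ε := by
  refine Real.sSup_le ?_ (add_nonneg (Real.sSup_nonneg ?_) hε)
  · rintro _ ⟨x, hx, rfl⟩
    calc ‖f x‖ ≤ ‖g x‖ + ‖f x - g x‖ := norm_le_norm_add_norm_sub' (f x) (g x)
      _ ≤ sSup ((fun y => ‖g y‖) '' K) + ε := add_le_add (le_csSup hg ⟨x, hx, rfl⟩) (hfg x hx)
  · rintro _ ⟨x, -, rfl⟩
    exact norm_nonneg _

namespace RiemannDomain

variable {X : Type*} [TopologicalSpace X] {n : ℕ} {RD : RiemannDomain X n}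

theorem HolomorphicOn.continuousOn {f : X → ℂ} {A : Set X} (h : RD.HolomorphicOn f A) :
    ContinuousOn f A := by
  intro x hx
  obtain ⟨U, hU, hxU, -, hopen, g, hg, heq⟩ := h x hx
  have hgπ : ContinuousAt (g ∘ RD.π) x :=
    (hg.differentiableAt (hopen.mem_nhds ⟨x, hxU, rfl⟩)).continuousAt.comp
      RD.continuous_π.continuousAt
  have hfg : f =ᶠ[nhdsWithin x A] g ∘ RD.π := by
    filter_upwards [mem_nhdsWithin_of_mem_nhds (hU.mem_nhds hxU), self_mem_nhdsWithin]
      with y hyU hyA using heq ⟨hyU, hyA⟩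
  exact hgπ.continuousWithinAt.congr_of_eventuallyEq hfg (heq ⟨hxU, hx⟩)

theorem HolomorphicOn.mono {f : X → ℂ} {A B : Set X} (h : RD.HolomorphicOn f A) (hBA : B ⊆ A) :
    RD.HolomorphicOn f B := by
  intro x hx
  obtain ⟨U, hU, hxU, hinj, hopen, g, hg, heq⟩ := h x (hBA hx)
  exact ⟨U, hU, hxU, hinj, hopen, g, hg, fun y hy => heq ⟨hy.1, hBA hy.2⟩⟩

theorem bddAbove_norm_image_of_holomorphicOn {f : X → ℂ} {Ω K : Set X}
    (hf : RD.HolomorphicOn f Ω) (hK : IsCompact K) (hKΩ : K ⊆ Ω) :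
    BddAbove ((fun y => ‖f y‖) '' K) :=
  (hK.image_of_continuousOn (hf.continuousOn.mono hKΩ).norm).bddAbove

theorem subset_hull {Ω K : Set X} (hK : IsCompact K) (hKΩ : K ⊆ Ω) : K ⊆ RD.hull Ω K :=
  fun x hx => ⟨hKΩ hx, fun _ hf =>
    le_csSup (bddAbove_norm_image_of_holomorphicOn hf hK hKΩ) ⟨x, hx, rfl⟩⟩

/-- A function of `𝒪(Ω')` separating `ζ ∈ K̂_Ω` from `K` would pass this on to any close
enough approximant in `𝒪(Ω)` on `K̂_Ω ⊇ K`, which cannot separate `ζ` from `K`. -/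
theorem hull_subset_hull_of_approx {Ω Ω' K : Set X} (hK : IsCompact K) (hKΩ : K ⊆ Ω)
    (hhull : RD.hull Ω K ⊆ Ω')
    (happrox : ∀ g : X → ℂ, RD.HolomorphicOn g Ω' → ∀ ε : ℝ, 0 < ε →
      ∃ f : X → ℂ, RD.HolomorphicOn f Ω ∧ ∀ x ∈ RD.hull Ω K, ‖f x - g x‖ < ε) :
    RD.hull Ω K ⊆ RD.hull Ω' K := by
  intro ζ hζ
  refine ⟨hhull hζ, fun g hg => le_of_forall_pos_le_add fun ε hε => ?_⟩
  have hKhull : K ⊆ RD.hull Ω K := subset_hull hK hKΩ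
  have hgK := bddAbove_norm_image_of_holomorphicOn hg hK (hKhull.trans hhull)
  obtain ⟨f, hf, hfg⟩ := happrox g hg (ε / 2) (half_pos hε)
  calc ‖g ζ‖ ≤ ‖f ζ‖ + ‖g ζ - f ζ‖ := norm_le_norm_add_norm_sub' (g ζ) (f ζ)
    _ ≤ sSup ((fun y => ‖f y‖) '' K) + ε / 2 :=
      add_le_add (hζ.2 f hf) (by rw [norm_sub_rev]; exact (hfg ζ hζ).le)
    _ ≤ sSup ((fun y => ‖g y‖) '' K) + ε / 2 + ε / 2 := by
      gcongr
      exact sSup_norm_image_le_add hgK (half_pos hε).le fun x hx => (hfg x (hKhull hx)).le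
    _ = sSup ((fun y => ‖g y‖) '' K) + ε := by rw [add_assoc, add_halves]

end RiemannDomain

theorem stmt_15_general {X : Type*} [TopologicalSpace X] {n : ℕ} (RD : RiemannDomain X n)
    (φ : X → ℝ)
    (c b : ℝ) (hcb : c < b)
    (K : Set X) (hK : IsCompact K) (hKc : K ⊆ {x | φ x < c})
    (hsub : RD.hull {x | φ x < c} K ⊆ RD.hull {x | φ x < b} K)
    (hcc : CompactlyContained (RD.hull {x | φ x < b} K) {x | φ x < c})
    (hPex : ∃ (m : ℕ) (F : Fin m → X → ℂ), (∀ j, RD.HolomorphicOn (F j) {x | φ x < b}) ∧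
      CompactlyContained {x ∈ {x | φ x < b} | ∀ j, ‖F j x‖ < 1} {x | φ x < b} ∧
      closure (RD.hull {x | φ x < b} K) ⊆ {x ∈ {x | φ x < b} | ∀ j, ‖F j x‖ < 1} ∧
      closure {x ∈ {x | φ x < b} | ∀ j, ‖F j x‖ < 1} ⊆ {x | φ x < c})
    (hApprox : ∀ (m : ℕ) (F : Fin m → X → ℂ),
      (∀ j, RD.HolomorphicOn (F j) {x | φ x < b}) →
      CompactlyContained {x ∈ {x | φ x < b} | ∀ j, ‖F j x‖ < 1} {x | φ x < b} →
      closure (RD.hull {x | φ x < b} K) ⊆ {x ∈ {x | φ x < b} | ∀ j, ‖F j x‖ < 1} →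
      closure {x ∈ {x | φ x < b} | ∀ j, ‖F j x‖ < 1} ⊆ {x | φ x < c} →
      ∀ g : X → ℂ, RD.HolomorphicOn g {x ∈ {x | φ x < b} | ∀ j, ‖F j x‖ < 1} →
        ∀ ε : ℝ, 0 < ε → ∃ f : X → ℂ, RD.HolomorphicOn f {x | φ x < b} ∧
          ∀ x ∈ RD.hull {x | φ x < b} K, ‖f x - g x‖ < ε) :
    RD.hull {x | φ x < c} K = RD.hull {x | φ x < b} K := by
  obtain ⟨m, F, hF, hPb, hhullP, hPc⟩ := hPex
  refine hsub.antisymm (RD.hull_subset_hull_of_approx hK (fun x hx => (hKc hx).trans hcb)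
    (fun x hx => hcc.2 (subset_closure hx)) fun g hg => ?_)
  exact hApprox m F hF hPb hhullP hPc g (hg.mono fun x hx => hPc (subset_closure hx))

/-- Let `X_c ⊆ X_b` be Stein sublevel sets of a plurisubharmonic exhaustion
`φ`, `K ⋐ X_c` compact with `K̂_{X_c} ⊆ K̂_{X_b} ⋐ X_c`. If some `𝒪(X_b)`-analytic
polyhedron `P` with `K̂_{X_b} ⋐ P ⋐ X_c` exists, and every function holomorphic on such a
`P` can be approximated uniformly on `K̂_{X_b}` by functions in `𝒪(X_b)`, then
`K̂_{X_c} = K̂_{X_b}`. -/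
theorem stmt_15 {X : Type*} [TopologicalSpace X] {n : ℕ} (RD : RiemannDomain X n)
    (φ : X → ℝ) (hφ : RD.PSHOn φ Set.univ) (hex : RiemannDomain.IsExhaustion φ)
    (c b : ℝ) (hcb : c < b)
    (hSc : RD.IsSteinOn {x | φ x < c}) (hSb : RD.IsSteinOn {x | φ x < b})
    (K : Set X) (hK : IsCompact K) (hKc : K ⊆ {x | φ x < c})
    (hsub : RD.hull {x | φ x < c} K ⊆ RD.hull {x | φ x < b} K)
    (hcc : CompactlyContained (RD.hull {x | φ x < b} K) {x | φ x < c})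
    (hPex : ∃ (m : ℕ) (F : Fin m → X → ℂ), (∀ j, RD.HolomorphicOn (F j) {x | φ x < b}) ∧
      CompactlyContained {x ∈ {x | φ x < b} | ∀ j, ‖F j x‖ < 1} {x | φ x < b} ∧
      closure (RD.hull {x | φ x < b} K) ⊆ {x ∈ {x | φ x < b} | ∀ j, ‖F j x‖ < 1} ∧
      closure {x ∈ {x | φ x < b} | ∀ j, ‖F j x‖ < 1} ⊆ {x | φ x < c})
    (hApprox : ∀ (m : ℕ) (F : Fin m → X → ℂ),
      (∀ j, RD.HolomorphicOn (F j) {x | φ x < b}) →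
      CompactlyContained {x ∈ {x | φ x < b} | ∀ j, ‖F j x‖ < 1} {x | φ x < b} →
      closure (RD.hull {x | φ x < b} K) ⊆ {x ∈ {x | φ x < b} | ∀ j, ‖F j x‖ < 1} →
      closure {x ∈ {x | φ x < b} | ∀ j, ‖F j x‖ < 1} ⊆ {x | φ x < c} →
      ∀ g : X → ℂ, RD.HolomorphicOn g {x ∈ {x | φ x < b} | ∀ j, ‖F j x‖ < 1} →
        ∀ ε : ℝ, 0 < ε → ∃ f : X → ℂ, RD.HolomorphicOn f {x | φ x < b} ∧
          ∀ x ∈ RD.hull {x | φ x < b} K, ‖f x - g x‖ < ε) :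
    RD.hull {x | φ x < c} K = RD.hull {x | φ x < b} K :=
  stmt_15_general RD φ c b hcb K hK hKc hsub hcc hPex hApprox
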